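/- arXiv:1207.3217 — 3 statements merged into one kernel-verified Lean document; each statement's English description precedes it below -/
import Mathlib

section
/- Let (X,d) be a metric space, let A and B be finite sets of the same cardinality, let f : A → X and g : B → X be maps, and let δ > 0. Assume that the pushforward counting measures f_*#_A and g_*#_B are δ-close, i.e., for every subset S of X, the number of a ∈ A with f(a) ∈ S is at most the number of b ∈ B with g(b) in the δ-neighborhood V_δ(S) of S. Then there exists a bijection h : A → B such that for every a ∈ A one has d(g(h(a)), f(a)) ≤ δ. -/
/-! A metric consequence of Hall's marriage theorem (Prop. 2.5 / P:Hall of the paper). -/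

/-- Let `(X, d)` be a metric space, `A`, `B` finite sets of the same cardinality,
`f : A → X`, `g : B → X`, and `δ > 0`.  If the pushforward counting measures are
`δ`-close, i.e. for every subset `S ⊆ X` the number of `a ∈ A` with `f a ∈ S` is at
most the number of `b ∈ B` with `g b` in the closed `δ`-neighborhood of `S`, then
there is a bijection `h : A ≃ B` with `dist (g (h a)) (f a) ≤ δ` for all `a`. -/
theorem marriage_metric {X : Type*} [MetricSpace X]
    {A B : Type*} [Fintype A] [Fintype B]
    (hcard : Fintype.card A = Fintype.card B)
    (f : A → X) (g : B → X) (δ : ℝ) (hδ : 0 < δ)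
    (hclose : ∀ S : Set X,
      Nat.card {a : A // f a ∈ S} ≤
        Nat.card {b : B // ∃ s ∈ S, dist (g b) s ≤ δ}) :
    ∃ h : A ≃ B, ∀ a : A, dist (g (h a)) (f a) ≤ δ := by
  classical
  have hall : ∀ s : Finset A,
      s.card ≤ (s.biUnion (fun a =>
        Finset.univ.filter (fun b => dist (g b) (f a) ≤ δ))).card := by
    intro s
    have h1 := hclose (f '' (s : Set A))
    have hA : s.card ≤ Nat.card {a : A // f a ∈ f '' (s : Set A)} := by
      rw [Nat.card_eq_fintype_card, Fintype.card_subtype]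
      apply Finset.card_le_card
      intro a ha
      simp only [Finset.mem_filter, Finset.mem_univ, true_and]
      exact ⟨a, ha, rfl⟩
    have hB : Nat.card {b : B // ∃ t ∈ f '' (s : Set A), dist (g b) t ≤ δ} ≤
        (s.biUnion (fun a =>
          Finset.univ.filter (fun b => dist (g b) (f a) ≤ δ))).card := by
      rw [Nat.card_eq_fintype_card, Fintype.card_subtype]
      apply Finset.card_le_card
      intro b hb
      simp only [Finset.mem_filter, Finset.mem_univ, true_and] at hb
      obtain ⟨t, ⟨a, ha, rfl⟩, hd⟩ := hb
      exact Finset.mem_biUnion.mpr ⟨a, ha, by simp [hd]⟩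
    exact hA.trans (h1.trans hB)
  obtain ⟨h0, hinj, hmem⟩ :=
    (Finset.all_card_le_biUnion_card_iff_existsInjective' _).mp hall
  have hbij : Function.Bijective h0 :=
    (Fintype.bijective_iff_injective_and_card h0).mpr ⟨hinj, hcard⟩
  refine ⟨Equiv.ofBijective h0 hbij, fun a => ?_⟩
  have := hmem a
  simpa using this
end

section
/- Let a, b ∈ ℂ be such that T = ℂ/(aℤ + ibℤ) is a torus (i.e., a and ib are linearly independent over ℝ), equipped with the quotient metric induced from the standard metric on ℂ and with the Lebesgue (Haar) measure Λ. Let f be a continuous positive real-valued function on T and let δ ∈ (0, 1/3). Let m = (∫_T f dΛ)/Λ(T) be the mean value of f, and suppose that (1−δ)·m ≤ f(x) ≤ (1+δ)·m for all x ∈ T. Then the measure fΛ (the measure with density f with respect to Λ) is 4δ(|a|+|b|)-equidistributed, i.e., fΛ is 4δ(|a|+|b|)-close to the averaged measure m·Λ: the two measures have the same total mass, and for every Borel set A ⊆ T one has ∫_A f dΛ ≤ m·Λ(V_{4δ(|a|+|b|)}(A)). -/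
/-!
Let `V` be the `η`-neighbourhood of `A` and let `d s = Λ (A \ (A - s))` be the mass of `A` that
translation by `s` moves out of `A`. A translation by `w` with `‖w‖ ≤ η` moves `A` into `V`, so
`d w ≤ Λ V - Λ A`, and `d (n • w) ≤ n * d w`. Every point of the torus has a representative of
norm at most `(‖a‖ + ‖b‖) / 2`, hence is `n • w` with `‖w‖ ≤ η` for `n = ⌈1 / (8δ)⌉`. By Fubini the
average of `d` is `Λ A * Λ Aᶜ`, so `Λ A * Λ Aᶜ ≤ n (Λ V - Λ A) Λ univ`, which gives
`Λ V ≥ Λ A + δ min (Λ A) (Λ Aᶜ)`. On the other side, bounding `f` above by `(1 + δ) m` on `A`, or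
below by `(1 - δ) m` on `Aᶜ`, gives `∫_A f ≤ m (Λ A + δ min (Λ A) (Λ Aᶜ))`.
-/

open MeasureTheory

/-- The closed `η`-neighborhood `V_η(A)` of a set `A` in a pseudometric space. -/
def nbhdV {T : Type*} [PseudoMetricSpace T] (η : ℝ) (A : Set T) : Set T :=
  {x | ∃ y ∈ A, dist x y ≤ η}

open Set

section TranslationDefect

variable {G : Type*} [AddGroup G] [MeasurableSpace G] [MeasurableAdd G] (μ : Measure G)

theorem measure_diff_preimage_add_nsmul_le [μ.IsAddRightInvariant] (A : Set G) (t : G) (n : ℕ) :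
    μ (A \ (· + n • t) ⁻¹' A) ≤ n * μ (A \ (· + t) ⁻¹' A) := by
  induction n with
  | zero => simp
  | succ k ih =>
    have hcover : A \ (· + (k + 1) • t) ⁻¹' A ⊆
        A \ (· + k • t) ⁻¹' A ∪ (· + k • t) ⁻¹' (A \ (· + t) ⁻¹' A) := by
      intro x hx
      by_cases h : x + k • t ∈ A
      · exact Or.inr ⟨h, by simpa [succ_nsmul, add_assoc] using hx.2⟩
      · exact Or.inl ⟨hx.1, h⟩
    calc μ (A \ (· + (k + 1) • t) ⁻¹' A)
        ≤ μ (A \ (· + k • t) ⁻¹' A) + μ ((· + k • t) ⁻¹' (A \ (· + t) ⁻¹' A)) :=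
          (measure_mono hcover).trans (measure_union_le _ _)
      _ ≤ k * μ (A \ (· + t) ⁻¹' A) + μ (A \ (· + t) ⁻¹' A) := by
          rw [measure_preimage_add_right]; gcongr
      _ = (k + 1 : ℕ) * μ (A \ (· + t) ⁻¹' A) := by push_cast; ring

theorem lintegral_measure_diff_preimage_add [MeasurableAdd₂ G] [SFinite μ] [μ.IsAddLeftInvariant]
    {A : Set G} (hA : MeasurableSet A) :
    ∫⁻ s, μ (A \ (· + s) ⁻¹' A) ∂μ = μ A * μ Aᶜ := by
  set S : Set (G × G) := {p | p.1 ∈ A ∧ p.1 + p.2 ∉ A}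
  have hS : MeasurableSet S := (measurable_fst hA).inter (measurable_add hA.compl)
  calc ∫⁻ s, μ (A \ (· + s) ⁻¹' A) ∂μ = μ.prod μ S := (Measure.prod_apply_symm hS).symm
    _ = ∫⁻ x, A.indicator (fun _ => μ Aᶜ) x ∂μ := by
        rw [Measure.prod_apply hS]
        refine lintegral_congr fun x => ?_
        by_cases hx : x ∈ A
        · rw [indicator_of_mem hx, ← measure_preimage_add μ x Aᶜ]
          congr 1 with y
          simp [S, hx]
        · simp [S, hx]
    _ = μ A * μ Aᶜ := by rw [lintegral_indicator_const hA, mul_comm]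

end TranslationDefect

section Neighborhood

variable {G : Type*} [SeminormedAddCommGroup G] {A : Set G} {η : ℝ}

theorem subset_nbhdV (hη : 0 ≤ η) : A ⊆ nbhdV η A := fun x hx => ⟨x, hx, by simpa using hη⟩

theorem preimage_add_subset_nbhdV {w : G} (hw : ‖w‖ ≤ η) : (· + w) ⁻¹' A ⊆ nbhdV η A :=
  fun x hx => ⟨x + w, hx, by rwa [dist_comm, dist_self_add_left]⟩

variable [MeasurableSpace G] [MeasurableAdd G] {μ : Measure G}

theorem measure_add_measure_diff_preimage_add_le [μ.IsAddRightInvariant] (hA : MeasurableSet A)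
    (hη : 0 ≤ η) {w : G} (hw : ‖w‖ ≤ η) : μ A + μ (A \ (· + w) ⁻¹' A) ≤ μ (nbhdV η A) := by
  have hAw : MeasurableSet ((· + w) ⁻¹' A) := hA.preimage (measurable_add_const w)
  calc μ A + μ (A \ (· + w) ⁻¹' A) = μ ((· + w) ⁻¹' A ∪ A) := by
        nth_rw 1 [← measure_preimage_add_right μ w A]
        rw [← measure_union' disjoint_sdiff_right hAw, union_sdiff_self]
    _ ≤ μ (nbhdV η A) :=
        measure_mono (union_subset (preimage_add_subset_nbhdV hw) (subset_nbhdV hη))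

theorem measure_mul_measure_compl_le [IsFiniteMeasure μ] [MeasurableAdd₂ G] [μ.IsAddLeftInvariant]
    (hA : MeasurableSet A) {n : ℕ} (hcover : ∀ s : G, ∃ w, n • w = s ∧ ‖w‖ ≤ η) :
    μ A * μ Aᶜ ≤ n * (μ (nbhdV η A) - μ A) * μ univ := by
  have hη : 0 ≤ η := (norm_nonneg _).trans (hcover 0).choose_spec.2
  rw [← lintegral_measure_diff_preimage_add μ hA, ← lintegral_const]
  refine lintegral_mono fun s => ?_
  obtain ⟨w, rfl, hw⟩ := hcover s
  calc μ (A \ (· + n • w) ⁻¹' A) ≤ n * μ (A \ (· + w) ⁻¹' A) :=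
        measure_diff_preimage_add_nsmul_le μ A w n
    _ ≤ n * (μ (nbhdV η A) - μ A) := by
        gcongr
        exact ENNReal.le_sub_of_add_le_left (measure_ne_top μ A)
          (measure_add_measure_diff_preimage_add_le hA hη hw)

theorem add_mul_min_le_of_mul_le {x y z c δ : ℝ} (hx : 0 ≤ x) (hy : 0 ≤ y) (hxz : x ≤ z)
    (hcδ : 2 * c * δ ≤ 1) (hδ : 0 ≤ δ) (h : x * y ≤ c * (z - x) * (x + y)) :
    x + δ * min x y ≤ z := by
  rcases (add_nonneg hx hy).eq_or_lt with hxy | hxy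
  · have : min x y = 0 := by rw [min_eq_left (by linarith)]; linarith
    rw [this]; linarith
  · have hmin : min x y * (x + y) ≤ 2 * (x * y) := by
      rcases min_cases x y with ⟨hm, _⟩ | ⟨hm, _⟩ <;> rw [hm] <;> nlinarith
    have : min x y ≤ 2 * c * (z - x) := le_of_mul_le_mul_right (by linarith) hxy
    nlinarith [mul_le_mul_of_nonneg_left this hδ, min_le_left x y]

theorem measureReal_add_mul_min_le_measureReal_nbhdV [IsFiniteMeasure μ] [MeasurableAdd₂ G]
    [μ.IsAddLeftInvariant] (hA : MeasurableSet A) {n : ℕ}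
    (hcover : ∀ s : G, ∃ w, n • w = s ∧ ‖w‖ ≤ η) {δ : ℝ} (hδ : 0 ≤ δ) (hnδ : 2 * n * δ ≤ 1) :
    μ.real A + δ * min (μ.real A) (μ.real Aᶜ) ≤ μ.real (nbhdV η A) := by
  have hη : 0 ≤ η := (norm_nonneg _).trans (hcover 0).choose_spec.2
  have hAV : μ A ≤ μ (nbhdV η A) := measure_mono (subset_nbhdV hη)
  refine add_mul_min_le_of_mul_le measureReal_nonneg measureReal_nonneg
    (measureReal_mono (subset_nbhdV hη)) hnδ hδ ?_
  have key := ENNReal.toReal_mono (by finiteness) (measure_mul_measure_compl_le (μ := μ) hA hcover)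
  rwa [ENNReal.toReal_mul, ENNReal.toReal_mul, ENNReal.toReal_mul, ENNReal.toReal_natCast,
    ENNReal.toReal_sub_of_le hAV (measure_ne_top μ _), ← measureReal_def, ← measureReal_def,
    ← measureReal_def, ← measureReal_def, ← measureReal_add_measureReal_compl hA] at key

end Neighborhood

theorem setIntegral_le_mul_measureReal_add_mul_min {X : Type*} [MeasurableSpace X]
    {μ : Measure X} [IsFiniteMeasure μ] {f : X → ℝ} (hf : Integrable f μ) {m δ : ℝ}
    (hmass : ∫ x, f x ∂μ = m * μ.real univ)
    (hlow : ∀ x, (1 - δ) * m ≤ f x) (hhigh : ∀ x, f x ≤ (1 + δ) * m)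
    {A : Set X} (hA : MeasurableSet A) :
    ∫ x in A, f x ∂μ ≤ m * (μ.real A + δ * min (μ.real A) (μ.real Aᶜ)) := by
  have hup : ∫ x in A, f x ∂μ ≤ μ.real A * ((1 + δ) * m) := by
    simpa using setIntegral_mono hf.integrableOn (integrableOn_const (by finiteness)) hhigh
  have hcompl : μ.real Aᶜ * ((1 - δ) * m) ≤ ∫ x in Aᶜ, f x ∂μ := by
    simpa using setIntegral_mono (integrableOn_const (by finiteness)) hf.integrableOn hlow
  have hsplit := integral_add_compl hA hf
  rw [hmass, ← measureReal_add_measureReal_compl hA] at hsplit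
  rcases min_cases (μ.real A) (μ.real Aᶜ) with ⟨hmin, _⟩ | ⟨hmin, _⟩ <;> rw [hmin] <;> linarith

section Quotient

variable {E : Type*} [SeminormedAddCommGroup E] {L : AddSubgroup E} {R : ℝ}

theorem QuotientAddGroup.compactSpace_of_forall_exists_norm_sub_le [ProperSpace E]
    (hL : ∀ z : E, ∃ l ∈ L, ‖z - l‖ ≤ R) : CompactSpace (E ⧸ L) := by
  have himage : (mk '' Metric.closedBall (0 : E) R : Set (E ⧸ L)) = univ := by
    refine eq_univ_of_forall fun s => ?_
    obtain ⟨z, rfl⟩ := mk_surjective s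
    obtain ⟨l, hl, hzl⟩ := hL z
    refine ⟨z - l, by simpa using hzl, ?_⟩
    simpa [QuotientAddGroup.eq] using L.neg_mem hl
  exact ⟨himage ▸ (isCompact_closedBall (0 : E) R).image continuous_quot_mk⟩

theorem QuotientAddGroup.exists_nsmul_eq_norm_le [NormedSpace ℝ E]
    (hL : ∀ z : E, ∃ l ∈ L, ‖z - l‖ ≤ R) (s : E ⧸ L) {n : ℕ} (hn : n ≠ 0) :
    ∃ w : E ⧸ L, n • w = s ∧ ‖w‖ ≤ R / n := by
  obtain ⟨z, rfl⟩ := mk_surjective s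
  obtain ⟨l, hl, hzl⟩ := hL z
  have hn' : (0 : ℝ) < n := by positivity
  refine ⟨↑((n : ℝ)⁻¹ • (z - l)), ?_, ?_⟩
  · rw [← mk_nsmul, ← Nat.cast_smul_eq_nsmul ℝ, smul_inv_smul₀ hn'.ne', QuotientAddGroup.eq]
    simpa using hl
  · calc ‖(↑((n : ℝ)⁻¹ • (z - l)) : E ⧸ L)‖ ≤ ‖(n : ℝ)⁻¹ • (z - l)‖ := norm_mk_le_norm
      _ ≤ R / n := by
        rw [norm_smul, norm_inv, Real.norm_natCast, inv_mul_eq_div]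
        gcongr

end Quotient

theorem Module.Basis.exists_mem_closure_norm_sub_le {ι E : Type*} [Fintype ι]
    [SeminormedAddCommGroup E] [NormedSpace ℝ E] (B : Basis ι ℝ E) (z : E) :
    ∃ l ∈ AddSubgroup.closure (range B), ‖z - l‖ ≤ (∑ i, ‖B i‖) / 2 := by
  refine ⟨∑ i, round (B.repr z i) • B i,
    AddSubgroup.sum_mem _ fun i _ =>
      AddSubgroup.zsmul_mem _ (AddSubgroup.subset_closure (mem_range_self i)) _, ?_⟩
  have hz : z - ∑ i, round (B.repr z i) • B i = ∑ i, (B.repr z i - round (B.repr z i)) • B i := by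
    nth_rw 1 [← B.sum_repr z]
    simp only [sub_smul, Int.cast_smul_eq_zsmul, Finset.sum_sub_distrib]
  calc ‖z - ∑ i, round (B.repr z i) • B i‖
        ≤ ∑ i, ‖(B.repr z i - round (B.repr z i)) • B i‖ := hz ▸ norm_sum_le _ _
    _ = ∑ i, |B.repr z i - round (B.repr z i)| * ‖B i‖ := by
        simp only [_root_.norm_smul, Real.norm_eq_abs]
    _ ≤ ∑ i, 1 / 2 * ‖B i‖ := by gcongr with i; exact abs_sub_round _
    _ = (∑ i, ‖B i‖) / 2 := by rw [← Finset.mul_sum]; ring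

theorem exists_mem_closure_pair_norm_sub_le {a b : ℂ}
    (hab : LinearIndependent ℝ ![a, Complex.I * b]) (z : ℂ) :
    ∃ l ∈ AddSubgroup.closure {a, Complex.I * b}, ‖z - l‖ ≤ (‖a‖ + ‖b‖) / 2 := by
  let B := basisOfLinearIndependentOfCardEqFinrank hab (by simp [Complex.finrank_real_complex])
  have hB : ⇑B = ![a, Complex.I * b] := coe_basisOfLinearIndependentOfCardEqFinrank _ _
  simpa [hB, Matrix.range_cons_cons_empty, Fin.sum_univ_two, pair_comm] using
    B.exists_mem_closure_norm_sub_le z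

theorem torus_equidistribution_general (a b : ℂ)
    (hab : LinearIndependent ℝ ![a, Complex.I * b])
    (L : AddSubgroup ℂ) (hL : L = AddSubgroup.closure {a, Complex.I * b})
    [MeasurableSpace (ℂ ⧸ L)] [BorelSpace (ℂ ⧸ L)]
    (Λ : Measure (ℂ ⧸ L)) [Λ.IsAddHaarMeasure]
    (f : ℂ ⧸ L → ℝ) (hf : Continuous f)
    (δ : ℝ) (hδ0 : 0 < δ) (hδ : δ < 1 / 3)
    (m : ℝ) (hm : m = (∫ x, f x ∂Λ) / (Λ Set.univ).toReal)
    (hlow : ∀ x, (1 - δ) * m ≤ f x) (hhigh : ∀ x, f x ≤ (1 + δ) * m) :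
    (∫ x, f x ∂Λ) = m * (Λ Set.univ).toReal ∧
    ∀ A : Set (ℂ ⧸ L), MeasurableSet A →
      ∫ x in A, f x ∂Λ
        ≤ m * (Λ (nbhdV (4 * δ * (‖a‖ + ‖b‖)) A)).toReal := by
  subst hL
  have hrep := exists_mem_closure_pair_norm_sub_le hab
  have := QuotientAddGroup.compactSpace_of_forall_exists_norm_sub_le hrep
  have hmass : ∫ x, f x ∂Λ = m * Λ.real univ := by
    rw [hm, ← measureReal_def, div_mul_cancel₀ _ measureReal_univ_pos.ne']
  refine ⟨hmass, fun A hA => ?_⟩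
  have hm0 : 0 ≤ m := by nlinarith [hlow 0, hhigh 0]
  set n := ⌈1 / (8 * δ)⌉₊
  have hn0 : n ≠ 0 := (Nat.ceil_pos.2 (by positivity)).ne'
  have hn : 1 ≤ 8 * δ * n := by
    have := Nat.le_ceil (1 / (8 * δ)); rwa [div_le_iff₀' (by positivity)] at this
  have hnδ : 2 * n * δ ≤ 1 := by
    have := Nat.ceil_lt_add_one (one_div_nonneg.2 (by positivity : (0 : ℝ) ≤ 8 * δ))
    nlinarith [mul_lt_mul_of_pos_left this hδ0, mul_one_div_cancel (by positivity : 8 * δ ≠ 0)]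
  have hcover : ∀ s, ∃ w, n • w = s ∧ ‖w‖ ≤ 4 * δ * (‖a‖ + ‖b‖) := fun s => by
    obtain ⟨w, hws, hw⟩ := QuotientAddGroup.exists_nsmul_eq_norm_le hrep s hn0
    refine ⟨w, hws, hw.trans ?_⟩
    rw [div_le_iff₀ (by positivity)]
    nlinarith [norm_nonneg a, norm_nonneg b]
  calc ∫ x in A, f x ∂Λ ≤ m * (Λ.real A + δ * min (Λ.real A) (Λ.real Aᶜ)) :=
        setIntegral_le_mul_measureReal_add_mul_min
          (hf.integrable_of_hasCompactSupport (.of_compactSpace f)) hmass hlow hhigh hA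
    _ ≤ m * Λ.real (nbhdV (4 * δ * (‖a‖ + ‖b‖)) A) := by
        gcongr
        exact measureReal_add_mul_min_le_measureReal_nbhdV hA hcover hδ0.le hnδ

/-- Lemma 3.1 of Kahn–Markovic (Lemma L3 of the paper).  Let `T = ℂ/(aℤ + ibℤ)` be a
torus (so `a` and `ib` are `ℝ`-linearly independent), with the quotient metric from `ℂ`
and the Haar (Lebesgue) measure `Λ`.  If `f : T → ℝ` is continuous, positive, and
satisfies `(1-δ) m ≤ f ≤ (1+δ) m` where `m` is the mean value of `f` and `0 < δ < 1/3`,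
then the measure `f Λ` is `4δ(|a|+|b|)`-equidistributed: it has the same total mass as
`m Λ`, and `∫_A f dΛ ≤ m · Λ(V_{4δ(|a|+|b|)}(A))` for every Borel set `A`. -/
theorem torus_equidistribution (a b : ℂ)
    (hab : LinearIndependent ℝ ![a, Complex.I * b])
    (L : AddSubgroup ℂ) (hL : L = AddSubgroup.closure {a, Complex.I * b})
    [MeasurableSpace (ℂ ⧸ L)] [BorelSpace (ℂ ⧸ L)]
    (Λ : Measure (ℂ ⧸ L)) [Λ.IsAddHaarMeasure]
    (f : ℂ ⧸ L → ℝ) (hf : Continuous f) (hfpos : ∀ x, 0 < f x)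
    (δ : ℝ) (hδ0 : 0 < δ) (hδ : δ < 1 / 3)
    (m : ℝ) (hm : m = (∫ x, f x ∂Λ) / (Λ Set.univ).toReal)
    (hlow : ∀ x, (1 - δ) * m ≤ f x) (hhigh : ∀ x, f x ≤ (1 + δ) * m) :
    (∫ x, f x ∂Λ) = m * (Λ Set.univ).toReal ∧
    ∀ A : Set (ℂ ⧸ L), MeasurableSet A →
      ∫ x in A, f x ∂Λ
        ≤ m * (Λ (nbhdV (4 * δ * (‖a‖ + ‖b‖)) A)).toReal :=
  torus_equidistribution_general a b hab L hL Λ f hf δ hδ0 hδ m hm hlow hhigh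
end

section
/- For t ∈ ℝ let a_t denote the 2×2 complex matrix diag(e^{t/2}, e^{−t/2}), and let R denote the 2×2 complex matrix with entries R₁₁ = R₂₂ = cos(π/3) = 1/2 and R₁₂ = R₂₁ = −i·sin(π/3) = −i√3/2 (the rotation element R_{2π/3} of SU(2)). For r > 0 set g_r = a_{−r/4} · R · a_{r/4}. Then there exists a constant C > 0 such that for every r > 0, the Cartan radial component ℓ(r) of g_r, which equals 2·log‖g_r‖ where ‖·‖ is the operator norm on ℂ² with the Euclidean norm, satisfies |ℓ(r) − r/2 + log(4/3)| ≤ C·e^{−r/4}. -/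
open scoped Matrix.Norms.L2Operator

/-- The diagonal matrix `a_t = diag(e^{t/2}, e^{-t/2})`. -/
noncomputable def aFlow (t : ℝ) : Matrix (Fin 2) (Fin 2) ℂ :=
  !![Complex.exp (t / 2), 0; 0, Complex.exp (-t / 2)]

/-- The rotation element `R_{2π/3} ∈ SU(2)`, with entries
`R₁₁ = R₂₂ = cos(π/3) = 1/2` and `R₁₂ = R₂₁ = -i sin(π/3) = -i√3/2`. -/
noncomputable def Rrot : Matrix (Fin 2) (Fin 2) ℂ :=
  !![(1 / 2 : ℂ), -Complex.I * (Real.sqrt 3 / 2);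
     -Complex.I * (Real.sqrt 3 / 2), (1 / 2 : ℂ)]

/-! Conjugation by the diagonal flow scales the off-diagonal entries of `R` by `e^{∓r/4}`, so the
entries of `g_r` have moduli `1/2`, `(√3/2) e^{-r/4}`, `(√3/2) e^{r/4}`, `1/2`. The squared
operator norm lies between the squared length of the first column and the squared Frobenius norm,
that is between `(3/4) e^{r/2}` and `(3/4) e^{r/2} + 1/2 + (3/4) e^{-r/2}`. Since
`log ((3/4) e^{r/2}) = r/2 - log (4/3)`, taking logarithms bounds the error by
`(1/2 + (3/4) e^{-r/2}) / ((3/4) e^{r/2}) = O(e^{-r/2})`. -/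

namespace Matrix

variable {𝕜 m n : Type*} [RCLike 𝕜] [Fintype m] [Fintype n]

lemma sum_norm_sq_mulVec_le (A : Matrix m n 𝕜) (x : n → 𝕜) :
    ∑ i, ‖(A *ᵥ x) i‖ ^ 2 ≤ (∑ i, ∑ j, ‖A i j‖ ^ 2) * ∑ j, ‖x j‖ ^ 2 := by
  rw [Finset.sum_mul]
  refine Finset.sum_le_sum fun i _ ↦ ?_
  calc ‖(A *ᵥ x) i‖ ^ 2 ≤ (∑ j, ‖A i j‖ * ‖x j‖) ^ 2 := by
        gcongr
        simpa only [mulVec, dotProduct, norm_mul] using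
          norm_sum_le Finset.univ fun j ↦ A i j * x j
    _ ≤ _ := Finset.sum_mul_sq_le_sq_mul_sq _ _ _

variable [DecidableEq n]

lemma sum_norm_sq_col_le_l2_opNorm_sq (A : Matrix m n 𝕜) (j : n) :
    ∑ i, ‖A i j‖ ^ 2 ≤ ‖A‖ ^ 2 := by
  have h := A.l2_opNorm_mulVec (EuclideanSpace.single j 1)
  rw [PiLp.norm_single, norm_one, mul_one] at h
  simpa [EuclideanSpace.norm_sq_eq, mulVec_single_one] using pow_le_pow_left₀ (norm_nonneg _) h 2

lemma l2_opNorm_sq_le_sum_norm_sq (A : Matrix m n 𝕜) :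
    ‖A‖ ^ 2 ≤ ∑ i, ∑ j, ‖A i j‖ ^ 2 := by
  set S := ∑ i, ∑ j, ‖A i j‖ ^ 2
  have hS : 0 ≤ S := by positivity
  suffices ‖A‖ ≤ √S by
    simpa [Real.sq_sqrt hS] using pow_le_pow_left₀ (norm_nonneg _) this 2
  refine ContinuousLinearMap.opNorm_le_bound _ (Real.sqrt_nonneg S) fun x ↦ ?_
  refine (pow_le_pow_iff_left₀ (norm_nonneg _) (by positivity) two_ne_zero).mp ?_
  rw [mul_pow, Real.sq_sqrt hS, EuclideanSpace.norm_sq_eq, EuclideanSpace.norm_sq_eq]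
  exact A.sum_norm_sq_mulVec_le x

end Matrix

lemma Real.abs_log_sub_log_le {a b x : ℝ} (ha : 0 < a) (hax : a ≤ x) (hxb : x ≤ a + b) :
    |Real.log x - Real.log a| ≤ b / a := by
  rw [← Real.log_div (by linarith) ha.ne',
    abs_of_nonneg (Real.log_nonneg ((one_le_div ha).2 hax))]
  calc Real.log (x / a) ≤ x / a - 1 := Real.log_le_sub_one_of_pos (div_pos (by linarith) ha)
    _ ≤ b / a := by rw [div_sub_one ha.ne']; gcongr; linarith

lemma aFlow_neg_mul_mul_aFlow (t : ℝ) (M : Matrix (Fin 2) (Fin 2) ℂ) :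
    aFlow (-t) * M * aFlow t =
      !![M 0 0, Complex.exp (-t) * M 0 1; Complex.exp t * M 1 0, M 1 1] := by
  rw [M.eta_fin_two]
  ext i j
  fin_cases i <;> fin_cases j <;> simp [aFlow] <;>
    rw [mul_right_comm, ← Complex.exp_add] <;> ring_nf <;> simp

lemma sum_norm_sq_aFlow_conj_Rrot (t : ℝ) :
    ∑ i, ∑ j, ‖(aFlow (-t) * Rrot * aFlow t) i j‖ ^ 2
      = 1 / 2 + 3 / 4 * (Real.exp (2 * t) + Real.exp (-(2 * t))) := by
  simp [aFlow_neg_mul_mul_aFlow, Fin.sum_univ_two, Rrot, Complex.norm_exp, mul_pow, div_pow,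
    ← Real.exp_nat_mul]
  ring_nf

lemma sum_norm_sq_aFlow_conj_Rrot_col_zero (t : ℝ) :
    ∑ i, ‖(aFlow (-t) * Rrot * aFlow t) i 0‖ ^ 2 = 1 / 4 + 3 / 4 * Real.exp (2 * t) := by
  simp [aFlow_neg_mul_mul_aFlow, Fin.sum_univ_two, Rrot, Complex.norm_exp, mul_pow, div_pow,
    ← Real.exp_nat_mul]
  ring_nf

lemma two_mul_log_sub_add_log_four_div_three (r x : ℝ) :
    2 * Real.log x - r / 2 + Real.log (4 / 3)
      = Real.log (x ^ 2) - Real.log (3 / 4 * Real.exp (r / 2)) := by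
  rw [Real.log_pow, Real.log_mul (by norm_num) (Real.exp_pos _).ne', Real.log_exp,
    show (3 / 4 : ℝ) = (4 / 3)⁻¹ by norm_num, Real.log_inv]
  push_cast
  ring

/-- Estimate (eq:l) of the paper: for `g_r = a_{-r/4} · R_{2π/3} · a_{r/4}`, the Cartan
radial component `ℓ(r) = 2 log ‖g_r‖` (with `‖·‖` the `ℓ²`-operator norm) satisfies
`|ℓ(r) - r/2 + log(4/3)| ≤ C e^{-r/4}` for a universal constant `C > 0`. -/
theorem cartan_radial_estimate :
    ∃ C : ℝ, 0 < C ∧ ∀ r : ℝ, 0 < r →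
      |2 * Real.log ‖aFlow (-r / 4) * Rrot * aFlow (r / 4)‖ - r / 2 + Real.log (4 / 3)|
        ≤ C * Real.exp (-r / 4) := by
  refine ⟨5 / 3, by norm_num, fun r hr ↦ ?_⟩
  rw [neg_div, two_mul_log_sub_add_log_four_div_three]
  have hlow := (aFlow (-(r / 4)) * Rrot * aFlow (r / 4)).sum_norm_sq_col_le_l2_opNorm_sq 0
  have hup := (aFlow (-(r / 4)) * Rrot * aFlow (r / 4)).l2_opNorm_sq_le_sum_norm_sq
  rw [sum_norm_sq_aFlow_conj_Rrot_col_zero, show 2 * (r / 4) = r / 2 by ring] at hlow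
  rw [sum_norm_sq_aFlow_conj_Rrot, show 2 * (r / 4) = r / 2 by ring] at hup
  refine (Real.abs_log_sub_log_le (b := 1 / 2 + 3 / 4 * Real.exp (-(r / 2))) (by positivity)
    (by linarith) (by linarith)).trans ?_
  have hdecay : Real.exp (-(r / 2)) ≤ 1 := Real.exp_le_one_iff.2 (by linarith)
  have hgrowth : 1 ≤ Real.exp (-(r / 4)) * Real.exp (r / 2) := by
    rw [← Real.exp_add]; exact Real.one_le_exp (by linarith)
  rw [div_le_iff₀ (by positivity)]
  linarith
end
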